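/- Let γ > 0, C > 0, and for a < a* define f(s) = ((a*−a)/a*) s² + C e^{−γs} for s ∈ (0,∞). Then min_{s>0} f(s) = (1+o(1))·(a*−a)|ln(a*−a)|²/(a*γ²) as a ↗ a*, and the unique minimum point s_γ satisfies s_γ = (1/γ)[|ln(a*−a)| − ln|ln(a*−a)| + O(1)] as a ↗ a*. -/

import Mathlib

open MeasureTheory Filter Topology Metric Set

noncomputable section

abbrev Pt := EuclideanSpace ℝ (Fin 2)

/-- Gross–Pitaevskii energy functional. -/
def gpE (V : Pt → ℝ) (a : ℝ) (u : Pt → ℝ) : ℝ :=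
  (∫ x, ‖fderiv ℝ u x‖ ^ 2) + (∫ x, V x * u x ^ 2) - a / 2 * ∫ x, u x ^ 4

/-- Admissible class: unit L²-sphere of `H = {u ∈ H¹ : ∫ V u² < ∞}`. -/
def Adm (V : Pt → ℝ) (u : Pt → ℝ) : Prop :=
  Integrable (fun x => ‖fderiv ℝ u x‖ ^ 2) ∧ Integrable (fun x => V x * u x ^ 2) ∧
  Integrable (fun x => u x ^ 2) ∧ Integrable (fun x => u x ^ 4) ∧ (∫ x, u x ^ 2) = 1

/-- The GP ground-state energy `e(a)`. -/
def gpe (V : Pt → ℝ) (a : ℝ) : ℝ := sInf ((gpE V a) '' {u | Adm V u})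

/-- Laplacian as the sum of repeated directional derivatives. -/
def lap (u : Pt → ℝ) (x : Pt) : ℝ :=
  ∑ i : Fin 2, fderiv ℝ (fun y => fderiv ℝ u y (EuclideanSpace.single i 1)) x
      (EuclideanSpace.single i 1)

/-- `Q` is the positive radial ground state of `−Δu + u = u³` in `ℝ²`. -/
def IsGroundQ (Q : Pt → ℝ) : Prop :=
  (∀ x, 0 < Q x) ∧ (∀ x y : Pt, ‖x‖ = ‖y‖ → Q x = Q y) ∧
  Integrable (fun x => Q x ^ 2) ∧ Integrable (fun x => ‖fderiv ℝ Q x‖ ^ 2) ∧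
  Integrable (fun x => Q x ^ 4) ∧ (∀ x, -lap Q x + Q x = Q x ^ 3)

/-!
Put `ε = (a* - a) / a*`. The function `f t = ε t² + C e^{-γt}` has a critical point `σ > 0`,
`2 ε σ = C γ e^{-γσ}`, and since `e^{-γt}` lies above its tangent at `σ`,
`f t ≥ f σ + ε (t - σ)²`: `σ` is the unique minimiser. With `u = γ σ` and `ℓ = |ln (a* - a)|`
the critical-point equation reads `u + ln u = ℓ + O(1)`, so `u = ℓ - ln ℓ + O(1)`, and
`f σ = ε (u² + 2u) / γ²` with `u / ℓ → 1` gives the leading order of the minimum.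
-/

open Real

section CriticalPoint

variable {ε γ C σ : ℝ}

lemma exists_two_mul_mul_eq_mul_exp (hε : 0 < ε) (hγ : 0 < γ) (hC : 0 < C) :
    ∃ t, 0 < t ∧ 2 * ε * t = C * γ * exp (-(γ * t)) := by
  set g : ℝ → ℝ := fun t => 2 * ε * t - C * γ * exp (-(γ * t))
  have hT : 0 ≤ C * γ / (2 * ε) := by positivity
  have hg0 : g 0 < 0 := by
    simp only [g, mul_zero, neg_zero, exp_zero, mul_one, zero_sub, neg_lt_zero]
    positivity
  have hgT : 0 < g (C * γ / (2 * ε)) := by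
    have hexp : exp (-(γ * (C * γ / (2 * ε)))) < 1 :=
      exp_lt_one_iff.2 (neg_lt_zero.2 (by positivity))
    have hval : g (C * γ / (2 * ε)) = C * γ * (1 - exp (-(γ * (C * γ / (2 * ε))))) := by
      simp only [g]; field_simp
    rw [hval]
    exact mul_pos (mul_pos hC hγ) (sub_pos.2 hexp)
  obtain ⟨t, ht, hgt⟩ :=
    intermediate_value_Ioo hT (by fun_prop : Continuous g).continuousOn ⟨hg0, hgT⟩
  exact ⟨t, ht.1, sub_eq_zero.1 hgt⟩

/-- `exp (-(γ t))` lies above its tangent at `σ`, and the critical-point equation cancels the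
linear terms. -/
lemma add_mul_sq_sub_le_of_crit (hC : 0 ≤ C) (hσ : 2 * ε * σ = C * γ * exp (-(γ * σ)))
    (t : ℝ) :
    ε * σ ^ 2 + C * exp (-(γ * σ)) + ε * (t - σ) ^ 2 ≤ ε * t ^ 2 + C * exp (-(γ * t)) := by
  have hsplit : exp (-(γ * t)) = exp (-(γ * σ)) * exp (-(γ * (t - σ))) := by
    rw [← exp_add]; ring_nf
  have htangent := mul_le_mul_of_nonneg_left (add_one_le_exp (-(γ * (t - σ))))
    (mul_nonneg hC (exp_pos (-(γ * σ))).le)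
  rw [hsplit]
  linear_combination htangent - (t - σ) * hσ

lemma isMinOn_of_crit (hε : 0 ≤ ε) (hC : 0 ≤ C) (hσ : 2 * ε * σ = C * γ * exp (-(γ * σ)))
    (s : Set ℝ) : IsMinOn (fun t => ε * t ^ 2 + C * exp (-(γ * t))) s σ :=
  isMinOn_iff.2 fun t _ =>
    (le_add_of_nonneg_right (by positivity)).trans (add_mul_sq_sub_le_of_crit hC hσ t)

lemma eq_of_isMinOn_of_crit (hε : 0 < ε) (hC : 0 ≤ C)
    (hσ : 2 * ε * σ = C * γ * exp (-(γ * σ))) {s : Set ℝ} (hσs : σ ∈ s) {t : ℝ}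
    (ht : IsMinOn (fun t => ε * t ^ 2 + C * exp (-(γ * t))) s t) : t = σ := by
  have hle : ε * t ^ 2 + C * exp (-(γ * t)) ≤ ε * σ ^ 2 + C * exp (-(γ * σ)) := ht hσs
  have hsq : (t - σ) ^ 2 ≤ 0 :=
    nonpos_of_mul_nonpos_right (by linarith [add_mul_sq_sub_le_of_crit hC hσ t]) hε
  exact sub_eq_zero.1 (pow_eq_zero_iff two_ne_zero |>.1 (hsq.antisymm (sq_nonneg _)))

lemma add_log_eq_of_crit (hε : 0 < ε) (hγ : 0 < γ) (hC : 0 < C) (hσ₀ : 0 < σ)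
    (hσ : 2 * ε * σ = C * γ * exp (-(γ * σ))) :
    γ * σ + log (γ * σ) = log (C * γ ^ 2 / 2) - log ε := by
  have hprod : γ * σ * exp (γ * σ) = C * γ ^ 2 / 2 / ε := by
    have hexp : exp (-(γ * σ)) * exp (γ * σ) = 1 := by rw [← exp_add]; simp
    field_simp
    linear_combination exp (γ * σ) * hσ + C * γ * hexp
  have hlog := congrArg log hprod
  rw [log_mul (by positivity) (exp_pos _).ne', log_exp, log_div (by positivity) hε.ne'] at hlog
  linarith

lemma value_eq_of_crit (hγ : γ ≠ 0) (hσ : 2 * ε * σ = C * γ * exp (-(γ * σ))) :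
    ε * σ ^ 2 + C * exp (-(γ * σ)) = ε * ((γ * σ) ^ 2 + 2 * (γ * σ)) / γ ^ 2 := by
  rw [eq_div_iff (pow_ne_zero 2 hγ)]
  linear_combination -γ * hσ

end CriticalPoint

section LogAsymptotics

variable {u L K : ℝ}

lemma abs_log_sub_log_le_of_add_log_eq (hu : 0 < u) (hL : 4 * |K| + 1 ≤ L)
    (h : u + log u = L + K) : |log u - log L| ≤ 3 := by
  have hK := neg_abs_le K
  have hL₀ : 0 < L := by linarith [abs_nonneg K]
  have hupper : u ≤ 2 * L := by
    rcases le_or_gt u 1 with hu₁ | hu₁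
    · linarith [abs_nonneg K]
    · linarith [log_pos hu₁, le_abs_self K]
  have hlower : L ≤ 4 * u := by linarith [log_le_sub_one_of_pos hu]
  have hratio : 0 < u / L := div_pos hu hL₀
  rw [← log_div hu.ne' hL₀.ne', abs_le]
  constructor
  · have hinv : (u / L)⁻¹ ≤ 4 := by rw [inv_div, div_le_iff₀ hu]; linarith
    linarith [one_sub_inv_le_log_of_pos hratio]
  · have : u / L ≤ 2 := by rw [div_le_iff₀ hL₀]; linarith
    linarith [log_le_sub_one_of_pos hratio]

lemma abs_sub_sub_log_le_of_add_log_eq (hu : 0 < u) (hL : 4 * |K| + 1 ≤ L)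
    (h : u + log u = L + K) : |u - (L - log L)| ≤ |K| + 3 :=
  calc |u - (L - log L)| = |K - (log u - log L)| := by congr 1; linarith
    _ ≤ |K| + |log u - log L| := abs_sub _ _
    _ ≤ |K| + 3 := by gcongr; exact abs_log_sub_log_le_of_add_log_eq hu hL h

end LogAsymptotics

section Limits

variable {α : Type*} {l : Filter α} {u L : α → ℝ}

lemma tendsto_div_of_abs_sub_sub_log_le {M : ℝ} (hL : Tendsto L l atTop)
    (hu : ∀ᶠ x in l, |u x - (L x - log (L x))| ≤ M) :
    Tendsto (fun x => u x / L x) l (𝓝 1) := by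
  have hlog : Tendsto (fun x => log (L x) / L x) l (𝓝 0) :=
    isLittleO_log_id_atTop.tendsto_div_nhds_zero.comp hL
  have herr : Tendsto (fun x => (u x - (L x - log (L x))) / L x) l (𝓝 0) := by
    refine squeeze_zero_norm' ?_ ((tendsto_const_nhds (x := M)).div_atTop hL)
    filter_upwards [hu, hL.eventually_gt_atTop 0] with x hx hLx
    rw [norm_div, norm_of_nonneg hLx.le]
    exact div_le_div_of_nonneg_right hx hLx.le
  have hsum := (tendsto_const_nhds (x := (1 : ℝ))).sub hlog |>.add herr
  rw [sub_zero, add_zero] at hsum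
  refine hsum.congr' ?_
  filter_upwards [hL.eventually_gt_atTop 0] with x hx
  field_simp
  ring

lemma tendsto_sq_add_two_mul_div_sq (hL : Tendsto L l atTop)
    (hu : Tendsto (fun x => u x / L x) l (𝓝 1)) :
    Tendsto (fun x => (u x ^ 2 + 2 * u x) / L x ^ 2) l (𝓝 1) := by
  have hsum := (hu.pow 2).add ((hu.mul (tendsto_inv_atTop_zero.comp hL)).const_mul 2)
  rw [one_pow, mul_zero, mul_zero, add_zero] at hsum
  refine hsum.congr' ?_
  filter_upwards [hL.eventually_ne_atTop 0] with x hx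
  simp only [Function.comp_apply]
  field_simp

lemma tendsto_const_sub_nhdsLT (b : ℝ) : Tendsto (fun a => b - a) (𝓝[<] b) (𝓝[>] 0) := by
  refine tendsto_nhdsWithin_iff.2
    ⟨?_, eventually_nhdsWithin_of_forall fun a ha => mem_Ioi.2 (sub_pos.2 ha)⟩
  exact ((continuous_const.sub continuous_id).tendsto' b 0 (sub_self b)).mono_left
    nhdsWithin_le_nhds

end Limits

/-- asymptotics of the minimum of
`f(s) = ((a*−a)/a*) s² + C e^{−γ s}` over `s > 0` as `a ↗ a*`. -/
theorem min_asymptotics (astar γ C : ℝ) (hastar : 0 < astar) (hγ : 0 < γ) (hC : 0 < C) :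
    ∃ s : ℝ → ℝ,
      (∀ᶠ a in 𝓝[<] astar,
        s a ∈ Set.Ioi (0:ℝ) ∧
        IsMinOn (fun t => (astar - a) / astar * t ^ 2 + C * Real.exp (-(γ * t)))
          (Set.Ioi 0) (s a) ∧
        (∀ t ∈ Set.Ioi (0:ℝ),
          IsMinOn (fun t' => (astar - a) / astar * t' ^ 2 + C * Real.exp (-(γ * t')))
            (Set.Ioi 0) t → t = s a)) ∧
      (∃ M : ℝ, ∀ᶠ a in 𝓝[<] astar,
        |γ * s a - (|Real.log (astar - a)| - Real.log |Real.log (astar - a)|)| ≤ M) ∧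
      Tendsto (fun a =>
          ((astar - a) / astar * (s a) ^ 2 + C * Real.exp (-(γ * s a))) /
            ((astar - a) * |Real.log (astar - a)| ^ 2 / (astar * γ ^ 2)))
        (𝓝[<] astar) (𝓝 1) := by
  have hε : ∀ a, 0 < astar - a → 0 < (astar - a) / astar := fun a ha => div_pos ha hastar
  choose! s hs_pos hs_crit using fun a ha => exists_two_mul_mul_eq_mul_exp (hε a ha) hγ hC
  have hgap := tendsto_const_sub_nhdsLT astar
  have hgap_small : ∀ᶠ a in 𝓝[<] astar, astar - a ∈ Ioo 0 1 := hgap (Ioo_mem_nhdsGT one_pos)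
  have hℓ : Tendsto (fun a => |log (astar - a)|) (𝓝[<] astar) atTop :=
    tendsto_abs_atBot_atTop.comp (tendsto_log_nhdsGT_zero.comp hgap)
  set K := log (C * γ ^ 2 / 2) + log astar
  have hu : ∀ᶠ a in 𝓝[<] astar, γ * s a + log (γ * s a) = |log (astar - a)| + K := by
    filter_upwards [hgap_small] with a ⟨hd₀, hd₁⟩
    rw [add_log_eq_of_crit (hε a hd₀) hγ hC (hs_pos a hd₀) (hs_crit a hd₀),
      log_div hd₀.ne' hastar.ne', abs_of_neg (log_neg hd₀ hd₁)]
    ring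
  have hM : ∀ᶠ a in 𝓝[<] astar,
      |γ * s a - (|log (astar - a)| - log |log (astar - a)|)| ≤ |K| + 3 := by
    filter_upwards [hgap_small, hu, hℓ.eventually_ge_atTop (4 * |K| + 1)] with a hd hua hℓa
    exact abs_sub_sub_log_le_of_add_log_eq (mul_pos hγ (hs_pos a hd.1)) hℓa hua
  refine ⟨s, ?_, ⟨|K| + 3, hM⟩, ?_⟩
  · filter_upwards [hgap_small] with a ⟨hd₀, _⟩
    exact ⟨hs_pos a hd₀, isMinOn_of_crit (hε a hd₀).le hC.le (hs_crit a hd₀) _,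
      fun t _ ht => eq_of_isMinOn_of_crit (hε a hd₀) hC.le (hs_crit a hd₀) (hs_pos a hd₀) ht⟩
  · refine (tendsto_sq_add_two_mul_div_sq hℓ (tendsto_div_of_abs_sub_sub_log_le hℓ hM)).congr' ?_
    filter_upwards [hgap_small, hℓ.eventually_gt_atTop 0] with a ⟨hd₀, _⟩ hℓa
    rw [value_eq_of_crit hγ.ne' (hs_crit a hd₀)]
    field_simp
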